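/- For M an (A,B)-Yetter-Drinfeld Hom-module and N a (C,D)-Yetter-Drinfeld Hom-module, the braiding map c_{M,N}: M⊗N → ᴹN⊗M defined by c_{M,N}(m⊗n) = ν(n₍₀₎) ⊗ B⁻¹(n₍₁₎)·μ⁻¹(m) is H-linear, where H acts on M⊗N by h·(m⊗n) = C(h₁)·m ⊗ C⁻¹BC(h₂)·n and on ᴹN⊗M by h·(n⊗m) = C⁻¹BC(h₁)▷n ⊗ B⁻¹DC⁻¹BC(h₂)·m. -/

import Mathlib

open TensorProduct

/-- A monoidal Hom-Hopf algebra (with bijective antipode) over a field `k`. -/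
structure HomHopf (k : Type*) [Field k] (H : Type*) [AddCommGroup H] [Module k H] where
  mul : H →ₗ[k] H →ₗ[k] H
  one : H
  a : H ≃ₗ[k] H
  comul : H →ₗ[k] H ⊗[k] H
  counit : H →ₗ[k] k
  S : H ≃ₗ[k] H
  hom_assoc : ∀ x y z : H, mul (a x) (mul y z) = mul (mul x y) (a z)
  a_mul : ∀ x y : H, a (mul x y) = mul (a x) (a y)
  mul_one' : ∀ x : H, mul x one = a x
  one_mul' : ∀ x : H, mul one x = a x
  a_one : a one = one
  hom_coassoc : (TensorProduct.map a.symm.toLinearMap comul).comp comul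
      = (TensorProduct.assoc k H H H).toLinearMap.comp
          ((TensorProduct.map comul a.symm.toLinearMap).comp comul)
  comul_a : ∀ x : H, comul (a x) = TensorProduct.map a.toLinearMap a.toLinearMap (comul x)
  counit_comul : ∀ x : H,
    (TensorProduct.lid k H) ((TensorProduct.map counit LinearMap.id) (comul x)) = a.symm x
  comul_counit : ∀ x : H,
    (TensorProduct.rid k H) ((TensorProduct.map LinearMap.id counit) (comul x)) = a.symm x
  counit_a : ∀ x : H, counit (a x) = counit x
  comul_mul : ∀ x y : H, comul (mul x y)
      = (TensorProduct.map (TensorProduct.lift mul) (TensorProduct.lift mul))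
          ((TensorProduct.tensorTensorTensorComm k H H H H) (comul x ⊗ₜ[k] comul y))
  comul_one : comul one = one ⊗ₜ[k] one
  counit_mul : ∀ x y : H, counit (mul x y) = counit x * counit y
  counit_one : counit one = 1
  S_a : ∀ x : H, S (a x) = a (S x)
  antipode_left : ∀ x : H,
    (TensorProduct.lift mul) ((TensorProduct.map S.toLinearMap LinearMap.id) (comul x))
      = counit x • one
  antipode_right : ∀ x : H,
    (TensorProduct.lift mul) ((TensorProduct.map LinearMap.id S.toLinearMap) (comul x))
      = counit x • one

/-- A monoidal Hom-Hopf algebra automorphism. -/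
structure IsHomHopfAuto {k : Type*} [Field k] {H : Type*} [AddCommGroup H] [Module k H]
    (HH : HomHopf k H) (f : H ≃ₗ[k] H) : Prop where
  map_mul : ∀ x y : H, f (HH.mul x y) = HH.mul (f x) (f y)
  map_one : f HH.one = HH.one
  map_comul : ∀ x : H, HH.comul (f x)
      = TensorProduct.map f.toLinearMap f.toLinearMap (HH.comul x)
  map_counit : ∀ x : H, HH.counit (f x) = HH.counit x
  map_a : ∀ x : H, f (HH.a x) = HH.a (f x)

/-- A left-right (A,B)-Yetter-Drinfeld Hom-module over `HH`. -/
structure YDModule {k : Type*} [Field k] {H : Type*} [AddCommGroup H] [Module k H]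
    (HH : HomHopf k H) (A B : H ≃ₗ[k] H)
    (M : Type*) [AddCommGroup M] [Module k M] where
  act : H →ₗ[k] M →ₗ[k] M
  coact : M →ₗ[k] M ⊗[k] H
  mu : M ≃ₗ[k] M
  hom_act : ∀ (h g : H) (m : M), act (HH.a h) (act g m) = act (HH.mul h g) (mu m)
  mu_act : ∀ (h : H) (m : M), mu (act h m) = act (HH.a h) (mu m)
  one_act : ∀ m : M, act HH.one m = mu m
  hom_coact : (TensorProduct.map mu.symm.toLinearMap HH.comul).comp coact
      = (TensorProduct.assoc k M H H).toLinearMap.comp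
          ((TensorProduct.map coact HH.a.symm.toLinearMap).comp coact)
  coact_mu : ∀ m : M, coact (mu m)
      = TensorProduct.map mu.toLinearMap HH.a.toLinearMap (coact m)
  coact_counit : ∀ m : M,
    (TensorProduct.rid k M) ((TensorProduct.map LinearMap.id HH.counit) (coact m)) = mu.symm m
  compat : ∀ (h : H) (m : M) (n : ℕ) (h1 h2 : Fin n → H),
      HH.comul h = ∑ i, h1 i ⊗ₜ[k] h2 i →
      ∀ (p : ℕ) (h21 h22 : Fin n → Fin p → H),
      (∀ i, HH.comul (h2 i) = ∑ j, h21 i j ⊗ₜ[k] h22 i j) →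
      ∀ (q : ℕ) (m0 : Fin q → M) (m1 : Fin q → H),
      coact m = ∑ l, m0 l ⊗ₜ[k] m1 l →
      coact (act h m) = ∑ i, ∑ j, ∑ l,
        act (HH.a (h21 i j)) (m0 l) ⊗ₜ[k]
          HH.mul (HH.mul (B (h22 i j)) (HH.a.symm (m1 l))) (A (HH.S.symm (h1 i)))

/-!
On a pure tensor `m ⊗ n` both sides are sums over the Sweedler components of `h` and of the
coaction of `n`. The left side is computed from the Yetter–Drinfeld compatibility of `N` for the
twisted action `C⁻¹BC(h₂)·n`; there the factor `C(S⁻¹(h₂₁))` lands next to `C(h₁)` in the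
`M`-component. After reassociating with hom-coassociativity the two merge into
`C(S⁻¹(h₍₂₎) h₍₁₎) = ε(h₍₁₎)·1`, and what is left is the action of `h` on `ᴹN ⊗ M` applied to
`c(m ⊗ n)`. This contraction uses that `S⁻¹` is a twisted antipode, which rests on `S` being
anti-multiplicative, and that `B` and `C` commute with `S`, which holds because `S` is the unique
convolution inverse of the identity.
-/

section Representations

variable {k : Type*} [Field k] {P Q R V : Type*} [AddCommGroup P] [Module k P]
  [AddCommGroup Q] [Module k Q] [AddCommGroup R] [Module k R] [AddCommGroup V] [Module k V]

theorem exists_fin_sum_tmul_family {ι : Type*} [Fintype ι] (t : ι → P ⊗[k] Q) :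
    ∃ (p : ℕ) (u : ι → Fin p → P) (v : ι → Fin p → Q), ∀ i, t i = ∑ j, u i j ⊗ₜ[k] v i j := by
  classical
  choose S hS using fun i => TensorProduct.exists_finset (t i)
  let T := Finset.univ.biUnion S
  -- index all the families by one enumeration of `T`, zeroing the terms that `S i` does not use
  refine ⟨T.card, fun i j => if (T.equivFin.symm j : P × Q) ∈ S i then
      (T.equivFin.symm j : P × Q).1 else 0, fun _ j => (T.equivFin.symm j : P × Q).2, fun i => ?_⟩
  have hST : S i ⊆ T := Finset.subset_biUnion_of_mem S (Finset.mem_univ i)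
  rw [hS i, Equiv.sum_comp T.equivFin.symm
      (fun t : T => (if (t : P × Q) ∈ S i then (t : P × Q).1 else 0) ⊗ₜ[k] (t : P × Q).2),
    Finset.sum_coe_sort T (fun t => (if t ∈ S i then t.1 else 0) ⊗ₜ[k] t.2)]
  simp only [ite_tmul]
  rw [Finset.sum_ite_mem, Finset.inter_eq_right.2 hST]

theorem exists_fin_sum_tmul (t : P ⊗[k] Q) :
    ∃ (q : ℕ) (u : Fin q → P) (v : Fin q → Q), t = ∑ j, u j ⊗ₜ[k] v j := by
  obtain ⟨q, u, v, h⟩ := exists_fin_sum_tmul_family fun _ : Unit => t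
  exact ⟨q, u (), v (), h ()⟩

def LinearMap.mk₃ (f : P → Q → R → V)
    (add₁ : ∀ x x' y z, f (x + x') y z = f x y z + f x' y z)
    (smul₁ : ∀ (c : k) x y z, f (c • x) y z = c • f x y z)
    (add₂ : ∀ x y y' z, f x (y + y') z = f x y z + f x y' z)
    (smul₂ : ∀ (c : k) x y z, f x (c • y) z = c • f x y z)
    (add₃ : ∀ x y z z', f x y (z + z') = f x y z + f x y z')
    (smul₃ : ∀ (c : k) x y z, f x y (c • z) = c • f x y z) :
    P →ₗ[k] Q →ₗ[k] R →ₗ[k] V where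
  toFun x := LinearMap.mk₂ k (f x) (add₂ x) (fun c y z => smul₂ c x y z) (add₃ x)
    (fun c y z => smul₃ c x y z)
  map_add' x x' := LinearMap.ext₂ (add₁ x x')
  map_smul' c x := LinearMap.ext₂ (smul₁ c x)

@[simp]
theorem LinearMap.mk₃_apply (f : P → Q → R → V) {add₁ smul₁ add₂ smul₂ add₃ smul₃} (x : P)
    (y : Q) (z : R) :
    LinearMap.mk₃ (k := k) f add₁ smul₁ add₂ smul₂ add₃ smul₃ x y z = f x y z :=
  rfl

end Representations

namespace HomHopf

variable {k : Type*} [Field k] {H : Type*} [AddCommGroup H] [Module k H] (HH : HomHopf k H)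

theorem a_symm_mul (x y : H) :
    HH.a.symm (HH.mul x y) = HH.mul (HH.a.symm x) (HH.a.symm y) := by
  rw [LinearEquiv.symm_apply_eq, HH.a_mul]
  simp

theorem a_symm_mul_mul (x y z : H) :
    HH.a.symm (HH.mul (HH.mul x y) z) = HH.mul x (HH.a.symm (HH.mul y (HH.a.symm z))) := by
  rw [← HH.a.apply_symm_apply z, ← HH.hom_assoc, a_symm_mul, HH.a.symm_apply_apply,
    HH.a.apply_symm_apply]

theorem semiconj_a_symm {f : H → H} (hf : Function.Semiconj f HH.a HH.a) :
    Function.Semiconj f HH.a.symm HH.a.symm :=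
  hf.inverses_right HH.a.apply_symm_apply HH.a.symm_apply_apply

theorem S_a_symm (x : H) : HH.S (HH.a.symm x) = HH.a.symm (HH.S x) :=
  HH.semiconj_a_symm HH.S_a x

theorem comul_a_symm (x : H) :
    HH.comul (HH.a.symm x) = map HH.a.symm.toLinearMap HH.a.symm.toLinearMap (HH.comul x) := by
  conv_rhs => rw [← HH.a.apply_symm_apply x, HH.comul_a, ← LinearMap.comp_apply, ← map_comp]
  simp

theorem a_symm_one : HH.a.symm HH.one = HH.one := by
  rw [LinearEquiv.symm_apply_eq, HH.a_one]

theorem S_one : HH.S HH.one = HH.one := by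
  have h := HH.antipode_left HH.one
  simp only [HH.comul_one, map_tmul, lift.tmul, HH.counit_one, one_smul, LinearEquiv.coe_coe,
    LinearMap.id_coe, id_eq, HH.mul_one'] at h
  rw [← HH.a.symm_apply_apply (HH.S HH.one), h, LinearEquiv.symm_apply_eq, HH.a_one]

def conv (f g : H →ₗ[k] H) : H →ₗ[k] H :=
  lift HH.mul ∘ₗ map f g ∘ₗ HH.comul

def unitCounit : H →ₗ[k] H :=
  HH.counit.smulRight HH.one

section Sweedler

variable {HH} {ι κ : Type*} [Fintype ι] [Fintype κ] {x y : H} {x₁ x₂ : ι → H} {y₁ y₂ : κ → H}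

theorem sum_counit_smul_left (hx : HH.comul x = ∑ i, x₁ i ⊗ₜ[k] x₂ i) :
    ∑ i, HH.counit (x₁ i) • x₂ i = HH.a.symm x := by
  simpa [hx, map_sum] using HH.counit_comul x

theorem sum_counit_smul_right (hx : HH.comul x = ∑ i, x₁ i ⊗ₜ[k] x₂ i) :
    ∑ i, HH.counit (x₂ i) • x₁ i = HH.a.symm x := by
  simpa [hx, map_sum] using HH.comul_counit x

theorem sum_S_mul (hx : HH.comul x = ∑ i, x₁ i ⊗ₜ[k] x₂ i) :
    ∑ i, HH.mul (HH.S (x₁ i)) (x₂ i) = HH.counit x • HH.one := by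
  simpa [hx, map_sum] using HH.antipode_left x

theorem sum_mul_S (hx : HH.comul x = ∑ i, x₁ i ⊗ₜ[k] x₂ i) :
    ∑ i, HH.mul (x₁ i) (HH.S (x₂ i)) = HH.counit x • HH.one := by
  simpa [hx, map_sum] using HH.antipode_right x

theorem comul_a_symm_eq_sum (hx : HH.comul x = ∑ i, x₁ i ⊗ₜ[k] x₂ i) :
    HH.comul (HH.a.symm x) = ∑ i, HH.a.symm (x₁ i) ⊗ₜ[k] HH.a.symm (x₂ i) := by
  simp [HH.comul_a_symm, hx, map_sum]

theorem comul_mul_eq_sum (hx : HH.comul x = ∑ i, x₁ i ⊗ₜ[k] x₂ i)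
    (hy : HH.comul y = ∑ j, y₁ j ⊗ₜ[k] y₂ j) :
    HH.comul (HH.mul x y) = ∑ i, ∑ j, HH.mul (x₁ i) (y₁ j) ⊗ₜ[k] HH.mul (x₂ i) (y₂ j) := by
  simp only [HH.comul_mul, hx, hy, sum_tmul, tmul_sum, map_sum, tensorTensorTensorComm_tmul,
    map_tmul, lift.tmul]
  exact Finset.sum_comm

theorem sum_coassoc {V : Type*} [AddCommGroup V] [Module k V] {σ τ : Type*} [Fintype σ]
    [Fintype τ] (f : H →ₗ[k] H →ₗ[k] H →ₗ[k] V) {x₁₁ x₁₂ : ι → σ → H} {x₂₁ x₂₂ : ι → τ → H}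
    (hx : HH.comul x = ∑ i, x₁ i ⊗ₜ[k] x₂ i)
    (hx₁ : ∀ i, HH.comul (x₁ i) = ∑ j, x₁₁ i j ⊗ₜ[k] x₁₂ i j)
    (hx₂ : ∀ i, HH.comul (x₂ i) = ∑ j, x₂₁ i j ⊗ₜ[k] x₂₂ i j) :
    ∑ i, ∑ j, f (x₁ i) (x₂₁ i j) (x₂₂ i j)
      = ∑ i, ∑ j, f (HH.a (x₁₁ i j)) (x₁₂ i j) (HH.a.symm (x₂ i)) := by
  have h := congrArg (lift (uncurry (.id k) H H V ∘ₗ f ∘ₗ HH.a.toLinearMap))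
    (LinearMap.congr_fun HH.hom_coassoc x)
  simpa [hx, hx₁, hx₂, map_sum, sum_tmul, tmul_sum] using h

theorem sum_mul_mul_S_mul_S (hx : HH.comul x = ∑ i, x₁ i ⊗ₜ[k] x₂ i)
    (hy : HH.comul y = ∑ j, y₁ j ⊗ₜ[k] y₂ j) :
    ∑ i, ∑ j, HH.mul (HH.mul (x₁ i) (y₁ j)) (HH.mul (HH.S (y₂ j)) (HH.S (x₂ i)))
      = (HH.counit x * HH.counit y) • HH.one := by
  have reassoc : ∀ p q r s : H, HH.mul (HH.mul p q) (HH.mul r s)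
      = HH.mul (HH.a p) (HH.mul (HH.a.symm (HH.mul q r)) s) := by
    intro p q r s
    have h₁ := HH.hom_assoc p q (HH.a.symm (HH.mul r s))
    have h₂ := HH.hom_assoc (HH.a.symm q) (HH.a.symm r) (HH.a.symm s)
    simp only [HH.a.apply_symm_apply] at h₁ h₂
    rw [← h₁, HH.a_symm_mul, HH.a_symm_mul, h₂]
  calc _ = ∑ i, HH.mul (HH.a (x₁ i))
        (HH.mul (HH.a.symm (∑ j, HH.mul (y₁ j) (HH.S (y₂ j)))) (HH.S (x₂ i))) := by
        simp only [reassoc, map_sum, LinearMap.sum_apply]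
    _ = HH.counit y • HH.a (∑ i, HH.mul (x₁ i) (HH.S (x₂ i))) := by
        simp [sum_mul_S hy, HH.a_symm_one, HH.one_mul', HH.a_mul, map_sum, Finset.smul_sum]
    _ = (HH.counit x * HH.counit y) • HH.one := by
        rw [sum_mul_S hx, map_smul, HH.a_one, smul_smul, mul_comm]

theorem sum_S_mul_mul_mul (hx : HH.comul x = ∑ i, x₁ i ⊗ₜ[k] x₂ i)
    (hy : HH.comul y = ∑ j, y₁ j ⊗ₜ[k] y₂ j) :
    ∑ i, ∑ j, HH.mul (HH.S (HH.mul (x₁ i) (y₁ j))) (HH.mul (x₂ i) (y₂ j))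
      = (HH.counit x * HH.counit y) • HH.one := by
  have hxy : HH.comul (HH.mul x y)
      = ∑ p : ι × κ, HH.mul (x₁ p.1) (y₁ p.2) ⊗ₜ[k] HH.mul (x₂ p.1) (y₂ p.2) := by
    rw [comul_mul_eq_sum hx hy, Fintype.sum_prod_type]
  rw [← HH.counit_mul, ← sum_S_mul hxy, Fintype.sum_prod_type]

end Sweedler

section Convolution

variable {HH}

theorem conv_apply {ι : Type*} [Fintype ι] {f g : H →ₗ[k] H} {x : H} {x₁ x₂ : ι → H}
    (hx : HH.comul x = ∑ i, x₁ i ⊗ₜ[k] x₂ i) :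
    HH.conv f g x = ∑ i, HH.mul (f (x₁ i)) (g (x₂ i)) := by
  simp [conv, hx, map_sum]

theorem conv_assoc {f g h : H →ₗ[k] H} (hf : Function.Semiconj f HH.a HH.a)
    (hh : Function.Semiconj h HH.a HH.a) :
    HH.conv (HH.conv f g) h = HH.conv f (HH.conv g h) := by
  ext x
  obtain ⟨n, x₁, x₂, hx⟩ := exists_fin_sum_tmul (HH.comul x)
  obtain ⟨p, x₁₁, x₁₂, hx₁⟩ := exists_fin_sum_tmul_family fun i => HH.comul (x₁ i)
  obtain ⟨r, x₂₁, x₂₂, hx₂⟩ := exists_fin_sum_tmul_family fun i => HH.comul (x₂ i)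
  have hcoassoc := sum_coassoc
    (LinearMap.mk₃ (fun u v w => HH.mul (f u) (HH.mul (g v) (h w)))
      (by simp) (by simp) (by simp) (by simp) (by simp) (by simp)) hx hx₁ hx₂
  simp only [LinearMap.mk₃_apply] at hcoassoc
  simp only [conv_apply hx, conv_apply (hx₁ _), conv_apply (hx₂ _), map_sum,
    LinearMap.sum_apply, hcoassoc]
  refine Finset.sum_congr rfl fun i _ => Finset.sum_congr rfl fun j _ => ?_
  rw [hf, HH.hom_assoc, ← hh, HH.a.apply_symm_apply]

theorem conv_unitCounit {f : H →ₗ[k] H} (hf : Function.Semiconj f HH.a HH.a) :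
    HH.conv f HH.unitCounit = f := by
  ext x
  obtain ⟨n, x₁, x₂, hx⟩ := exists_fin_sum_tmul (HH.comul x)
  calc HH.conv f HH.unitCounit x = HH.a (f (∑ i, HH.counit (x₂ i) • x₁ i)) := by
        simp [conv_apply hx, unitCounit, HH.mul_one', map_sum]
    _ = f x := by rw [sum_counit_smul_right hx, HH.semiconj_a_symm hf, HH.a.apply_symm_apply]

theorem unitCounit_conv {f : H →ₗ[k] H} (hf : Function.Semiconj f HH.a HH.a) :
    HH.conv HH.unitCounit f = f := by
  ext x
  obtain ⟨n, x₁, x₂, hx⟩ := exists_fin_sum_tmul (HH.comul x)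
  calc HH.conv HH.unitCounit f x = HH.a (f (∑ i, HH.counit (x₁ i) • x₂ i)) := by
        simp [conv_apply hx, unitCounit, HH.one_mul', map_sum]
    _ = f x := by rw [sum_counit_smul_left hx, HH.semiconj_a_symm hf, HH.a.apply_symm_apply]

variable (HH)

theorem id_conv_S : HH.conv LinearMap.id HH.S.toLinearMap = HH.unitCounit :=
  LinearMap.ext HH.antipode_right

theorem eq_S_of_conv_id {S' : H →ₗ[k] H} (hS' : Function.Semiconj S' HH.a HH.a)
    (h : HH.conv S' LinearMap.id = HH.unitCounit) : S' = HH.S.toLinearMap :=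
  calc S' = HH.conv S' (HH.conv LinearMap.id HH.S.toLinearMap) := by
        rw [id_conv_S, conv_unitCounit hS']
    _ = HH.conv HH.unitCounit HH.S.toLinearMap := by
        rw [← conv_assoc hS' (f := S') (g := LinearMap.id) HH.S_a, h]
    _ = HH.S.toLinearMap := unitCounit_conv HH.S_a

end Convolution

section AntipodeExpansions

variable {HH} {ι κ ι' κ' : Type*} [Fintype ι] [Fintype κ] [Fintype ι'] [Fintype κ'] {x y : H}
  {x₁ x₂ : ι → H} {y₁ y₂ : κ → H}

theorem S_mul_eq_sum {x₂₁ x₂₂ : ι → ι' → H} {y₂₁ y₂₂ : κ → κ' → H}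
    (hx : HH.comul x = ∑ i, x₁ i ⊗ₜ[k] x₂ i) (hy : HH.comul y = ∑ j, y₁ j ⊗ₜ[k] y₂ j)
    (hx₂ : ∀ i, HH.comul (x₂ i) = ∑ u, x₂₁ i u ⊗ₜ[k] x₂₂ i u)
    (hy₂ : ∀ j, HH.comul (y₂ j) = ∑ v, y₂₁ j v ⊗ₜ[k] y₂₂ j v) :
    HH.S (HH.mul x y) = ∑ i, ∑ u, ∑ j, ∑ v, HH.mul (HH.S (HH.mul (x₁ i) (y₁ j)))
      (HH.mul (HH.mul (x₂₁ i u) (y₂₁ j v)) (HH.mul (HH.S (y₂₂ j v)) (HH.S (x₂₂ i u)))) := by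
  calc HH.S (HH.mul x y)
      = HH.a (HH.S (HH.mul (HH.a.symm x) (HH.a.symm y))) := by
        rw [← HH.a_symm_mul, HH.S_a_symm, HH.a.apply_symm_apply]
    _ = ∑ i, ∑ j, HH.mul (HH.S (HH.mul (x₁ i) (y₁ j)))
          ((HH.counit (x₂ i) * HH.counit (y₂ j)) • HH.one) := by
        simp only [← sum_counit_smul_right hx, ← sum_counit_smul_right hy, map_sum, map_smul,
          LinearMap.sum_apply, LinearMap.smul_apply, Finset.smul_sum, smul_smul, HH.mul_one']
        rw [Finset.sum_comm]
        simp only [mul_comm]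
    _ = _ := by
        simp only [← sum_mul_mul_S_mul_S (hx₂ _) (hy₂ _), map_sum]
        exact Finset.sum_congr rfl fun i _ => Finset.sum_comm

theorem mul_S_S_eq_sum {x₁₁ x₁₂ : ι → ι' → H} {y₁₁ y₁₂ : κ → κ' → H}
    (hx : HH.comul x = ∑ i, x₁ i ⊗ₜ[k] x₂ i) (hy : HH.comul y = ∑ j, y₁ j ⊗ₜ[k] y₂ j)
    (hx₁ : ∀ i, HH.comul (x₁ i) = ∑ u, x₁₁ i u ⊗ₜ[k] x₁₂ i u)
    (hy₁ : ∀ j, HH.comul (y₁ j) = ∑ v, y₁₁ j v ⊗ₜ[k] y₁₂ j v) :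
    HH.mul (HH.S y) (HH.S x) = ∑ i, ∑ u, ∑ j, ∑ v,
      HH.mul (HH.mul (HH.S (HH.mul (x₁₁ i u) (y₁₁ j v))) (HH.mul (x₁₂ i u) (y₁₂ j v)))
        (HH.mul (HH.S (y₂ j)) (HH.S (x₂ i))) := by
  calc HH.mul (HH.S y) (HH.S x)
      = HH.a (HH.mul (HH.S (HH.a.symm y)) (HH.S (HH.a.symm x))) := by
        rw [HH.S_a_symm, HH.S_a_symm, ← HH.a_symm_mul, HH.a.apply_symm_apply]
    _ = ∑ i, ∑ j, HH.mul ((HH.counit (x₁ i) * HH.counit (y₁ j)) • HH.one)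
          (HH.mul (HH.S (y₂ j)) (HH.S (x₂ i))) := by
        simp only [← sum_counit_smul_left hx, ← sum_counit_smul_left hy, map_sum, map_smul,
          LinearMap.sum_apply, LinearMap.smul_apply, Finset.smul_sum, smul_smul, HH.one_mul']
    _ = _ := by
        simp only [← sum_S_mul_mul_mul (hx₁ _) (hy₁ _), map_sum, LinearMap.sum_apply]
        exact Finset.sum_congr rfl fun i _ => Finset.sum_comm

end AntipodeExpansions

theorem S_mul (x y : H) : HH.S (HH.mul x y) = HH.mul (HH.S y) (HH.S x) := by
  obtain ⟨n, x₁, x₂, hx⟩ := exists_fin_sum_tmul (HH.comul x)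
  obtain ⟨m, y₁, y₂, hy⟩ := exists_fin_sum_tmul (HH.comul y)
  obtain ⟨p, x₁₁, x₁₂, hx₁⟩ := exists_fin_sum_tmul_family fun i => HH.comul (x₁ i)
  obtain ⟨r, x₂₁, x₂₂, hx₂⟩ := exists_fin_sum_tmul_family fun i => HH.comul (x₂ i)
  obtain ⟨p', y₁₁, y₁₂, hy₁⟩ := exists_fin_sum_tmul_family fun j => HH.comul (y₁ j)
  obtain ⟨r', y₂₁, y₂₂, hy₂⟩ := exists_fin_sum_tmul_family fun j => HH.comul (y₂ j)
  have coassoc_y : ∀ i u, ∑ j, ∑ v, HH.mul (HH.S (HH.mul (x₁ i) (y₁ j)))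
      (HH.mul (HH.mul (x₂₁ i u) (y₂₁ j v)) (HH.mul (HH.S (y₂₂ j v)) (HH.S (x₂₂ i u))))
      = ∑ j, ∑ v, HH.mul (HH.S (HH.mul (x₁ i) (HH.a (y₁₁ j v))))
      (HH.mul (HH.mul (x₂₁ i u) (y₁₂ j v)) (HH.mul (HH.S (HH.a.symm (y₂ j))) (HH.S (x₂₂ i u)))) :=
    fun i u => by
      simpa using sum_coassoc (LinearMap.mk₃ (fun q₁ q₂ q₃ => HH.mul (HH.S (HH.mul (x₁ i) q₁))
        (HH.mul (HH.mul (x₂₁ i u) q₂) (HH.mul (HH.S q₃) (HH.S (x₂₂ i u)))))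
        (by simp) (by simp) (by simp) (by simp) (by simp) (by simp)) hy hy₁ hy₂
  have coassoc_x := sum_coassoc (LinearMap.mk₃ (fun q₁ q₂ q₃ => ∑ j, ∑ v,
      HH.mul (HH.S (HH.mul q₁ (HH.a (y₁₁ j v))))
        (HH.mul (HH.mul q₂ (y₁₂ j v)) (HH.mul (HH.S (HH.a.symm (y₂ j))) (HH.S q₃))))
      (by simp [Finset.sum_add_distrib]) (by simp [Finset.smul_sum])
      (by simp [Finset.sum_add_distrib]) (by simp [Finset.smul_sum])
      (by simp [Finset.sum_add_distrib]) (by simp [Finset.smul_sum])) hx hx₁ hx₂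
  simp only [LinearMap.mk₃_apply] at coassoc_x
  rw [S_mul_eq_sum hx hy hx₂ hy₂, mul_S_S_eq_sum hx hy hx₁ hy₁]
  simp only [coassoc_y, coassoc_x]
  refine Finset.sum_congr rfl fun i _ => Finset.sum_congr rfl fun u _ =>
    Finset.sum_congr rfl fun j _ => Finset.sum_congr rfl fun v _ => ?_
  rw [← HH.a_mul, HH.S_a, HH.S_a_symm, HH.S_a_symm, ← HH.a_symm_mul, HH.hom_assoc,
    HH.a.apply_symm_apply]

section Contraction

variable {HH} {V : Type*} [AddCommGroup V] [Module k V] {ι κ : Type*} [Fintype ι] [Fintype κ]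
  {x : H} {x₁ x₂ : ι → H} {x₂₁ x₂₂ : ι → κ → H}

theorem sum_S_symm_mul (hx : HH.comul x = ∑ i, x₁ i ⊗ₜ[k] x₂ i) :
    ∑ i, HH.mul (HH.S.symm (x₂ i)) (x₁ i) = HH.counit x • HH.one := by
  apply HH.S.injective
  simp [map_sum, S_mul, sum_S_mul hx, S_one]

theorem sum_S_symm_mul_a_symm (F : H →ₗ[k] H →ₗ[k] V) (hx : HH.comul x = ∑ i, x₁ i ⊗ₜ[k] x₂ i)
    (hx₂ : ∀ i, HH.comul (x₂ i) = ∑ j, x₂₁ i j ⊗ₜ[k] x₂₂ i j) :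
    ∑ i, ∑ j, F (HH.mul (HH.S.symm (x₂₁ i j)) (HH.a.symm (x₁ i))) (x₂₂ i j)
      = F HH.one (HH.a.symm (HH.a.symm x)) := by
  obtain ⟨p, x₁₁, x₁₂, hx₁⟩ := exists_fin_sum_tmul_family fun i => HH.comul (x₁ i)
  have coassoc := sum_coassoc
    ((HH.mul.flip.compl₁₂ HH.a.symm.toLinearMap HH.S.symm.toLinearMap).compr₂ F) hx hx₁ hx₂
  simp only [LinearMap.compr₂_apply, LinearMap.compl₁₂_apply, LinearMap.flip_apply,
    LinearEquiv.coe_coe, LinearEquiv.symm_apply_apply] at coassoc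
  rw [coassoc, ← sum_counit_smul_left hx, map_sum, map_sum]
  refine Finset.sum_congr rfl fun i _ => ?_
  simpa [map_sum] using congrArg (fun z => F z (HH.a.symm (x₂ i))) (sum_S_symm_mul (hx₁ i))

theorem sum_S_symm_mul_a_symm_comul {ν : Type*} [Fintype ν] (f : H →ₗ[k] H →ₗ[k] H →ₗ[k] V)
    {x₂₂₁ x₂₂₂ : ι → κ → ν → H} (hx : HH.comul x = ∑ i, x₁ i ⊗ₜ[k] x₂ i)
    (hx₂ : ∀ i, HH.comul (x₂ i) = ∑ j, x₂₁ i j ⊗ₜ[k] x₂₂ i j)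
    (hx₂₂ : ∀ i j, HH.comul (x₂₂ i j) = ∑ l, x₂₂₁ i j l ⊗ₜ[k] x₂₂₂ i j l) :
    ∑ i, ∑ j, ∑ l,
        f (x₂₂₁ i j l) (HH.mul (HH.S.symm (x₂₁ i j)) (HH.a.symm (x₁ i))) (x₂₂₂ i j l)
      = ∑ i, f (HH.a.symm (HH.a.symm (x₁ i))) HH.one (HH.a.symm (HH.a.symm (x₂ i))) := by
  have h := sum_S_symm_mul_a_symm ((uncurry (.id k) H H V ∘ₗ f.flip).compl₂ HH.comul) hx hx₂
  simpa [hx₂₂, comul_a_symm_eq_sum (comul_a_symm_eq_sum hx), map_sum] using h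

end Contraction

end HomHopf

namespace IsHomHopfAuto

variable {k : Type*} [Field k] {H : Type*} [AddCommGroup H] [Module k H] {HH : HomHopf k H}
  {f : H ≃ₗ[k] H}

theorem map_a_symm (hf : IsHomHopfAuto HH f) (x : H) : f (HH.a.symm x) = HH.a.symm (f x) :=
  HH.semiconj_a_symm hf.map_a x

theorem comul_eq_sum (hf : IsHomHopfAuto HH f) {ι : Type*} [Fintype ι] {x : H}
    {x₁ x₂ : ι → H} (hx : HH.comul x = ∑ i, x₁ i ⊗ₜ[k] x₂ i) :
    HH.comul (f x) = ∑ i, f (x₁ i) ⊗ₜ[k] f (x₂ i) := by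
  simp [hf.map_comul, hx, map_sum]

theorem symm (hf : IsHomHopfAuto HH f) : IsHomHopfAuto HH f.symm where
  map_mul x y := f.injective (by simp [hf.map_mul])
  map_one := f.injective (by simp [hf.map_one])
  map_comul x := by
    have h := hf.map_comul (f.symm x)
    rw [f.apply_symm_apply] at h
    rw [h, ← LinearMap.comp_apply, ← map_comp]
    simp
  map_counit x := by rw [← hf.map_counit, f.apply_symm_apply]
  map_a x := f.injective (by simp [hf.map_a])

theorem map_S (hf : IsHomHopfAuto HH f) (x : H) : f (HH.S x) = HH.S (f x) := by
  let S' := f.symm.toLinearMap ∘ₗ HH.S.toLinearMap ∘ₗ f.toLinearMap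
  have hS' : Function.Semiconj S' HH.a HH.a := fun x => by
    simp [S', hf.map_a, HH.S_a, hf.symm.map_a]
  have hconv : HH.conv S' LinearMap.id = HH.unitCounit := by
    ext x
    obtain ⟨n, x₁, x₂, hx⟩ := exists_fin_sum_tmul (HH.comul x)
    calc HH.conv S' LinearMap.id x = f.symm (∑ i, HH.mul (HH.S (f (x₁ i))) (f (x₂ i))) := by
          simp [HomHopf.conv_apply hx, S', map_sum, hf.symm.map_mul]
      _ = HH.unitCounit x := by
          simp [HomHopf.sum_S_mul (hf.comul_eq_sum hx), hf.map_counit, hf.symm.map_one,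
            HomHopf.unitCounit]
  have := LinearMap.congr_fun (HH.eq_S_of_conv_id hS' hconv) x
  simp only [S', LinearMap.comp_apply, LinearEquiv.coe_coe, LinearEquiv.symm_apply_eq] at this
  exact this.symm

theorem map_S_symm (hf : IsHomHopfAuto HH f) (x : H) :
    f (HH.S.symm x) = HH.S.symm (f x) := by
  rw [LinearEquiv.eq_symm_apply, ← hf.map_S, HH.S.apply_symm_apply]

end IsHomHopfAuto

namespace YDModule

variable {k : Type*} [Field k] {H : Type*} [AddCommGroup H] [Module k H] {HH : HomHopf k H}
  {A B C D : H ≃ₗ[k] H} {M N : Type*} [AddCommGroup M] [Module k M] [AddCommGroup N]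
  [Module k N]

theorem act_act_mu_symm (YM : YDModule HH A B M) (u v : H) (m : M) :
    YM.act u (YM.act v (YM.mu.symm m)) = YM.act (HH.mul (HH.a.symm u) v) m := by
  simpa using YM.hom_act (HH.a.symm u) v (YM.mu.symm m)

theorem mu_symm_act (YM : YDModule HH A B M) (u : H) (m : M) :
    YM.mu.symm (YM.act u m) = YM.act (HH.a.symm u) (YM.mu.symm m) := by
  rw [LinearEquiv.symm_apply_eq, YM.mu_act, HH.a.apply_symm_apply, YM.mu.apply_symm_apply]

def braiding (YM : YDModule HH A B M) (YN : YDModule HH C D N) : M ⊗[k] N →ₗ[k] N ⊗[k] M :=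
  lift (LinearMap.mk₂ k
    (fun m x => map YN.mu.toLinearMap (YM.act.flip (YM.mu.symm m) ∘ₗ B.symm.toLinearMap)
      (YN.coact x))
    (by simp [LinearMap.add_comp, map_add_right]) (by simp [LinearMap.smul_comp, map_smul_right])
    (by simp) (by simp))

theorem braiding_tmul (YM : YDModule HH A B M) (YN : YDModule HH C D N) (m : M) (x : N) :
    braiding YM YN (m ⊗ₜ[k] x)
      = map YN.mu.toLinearMap (YM.act.flip (YM.mu.symm m) ∘ₗ B.symm.toLinearMap) (YN.coact x) :=
  rfl

theorem braiding_tmul_eq_sum (YM : YDModule HH A B M) (YN : YDModule HH C D N) (m : M)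
    {x : N} {ι : Type*} [Fintype ι] {x₀ : ι → N} {x₁ : ι → H}
    (hx : YN.coact x = ∑ s, x₀ s ⊗ₜ[k] x₁ s) :
    braiding YM YN (m ⊗ₜ[k] x)
      = ∑ s, YN.mu (x₀ s) ⊗ₜ[k] YM.act (B.symm (x₁ s)) (YM.mu.symm m) := by
  simp [braiding_tmul, hx, map_sum]

theorem braiding_act_tmul_act (hB : IsHomHopfAuto HH B) (hC : IsHomHopfAuto HH C)
    (YM : YDModule HH A B M) (YN : YDModule HH C D N) (u : H) (m : M) {y : H} {x : N}
    {n p q : ℕ} {y₁ y₂ : Fin n → H} {y₂₁ y₂₂ : Fin n → Fin p → H} {x₀ : Fin q → N}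
    {x₁ : Fin q → H} (hy : HH.comul y = ∑ j, y₁ j ⊗ₜ[k] y₂ j)
    (hy₂ : ∀ j, HH.comul (y₂ j) = ∑ l, y₂₁ j l ⊗ₜ[k] y₂₂ j l)
    (hx : YN.coact x = ∑ s, x₀ s ⊗ₜ[k] x₁ s) :
    braiding YM YN (YM.act (C u) m ⊗ₜ[k] YN.act (C.symm (B (C y))) x)
      = ∑ j, ∑ l, ∑ s, YN.act (HH.a (HH.a (C.symm (B (C (y₂₁ j l)))))) (YN.mu (x₀ s)) ⊗ₜ[k]
          YM.act (HH.mul (B.symm (HH.mul (D (C.symm (B (C (y₂₂ j l))))) (HH.a.symm (x₁ s))))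
            (C (HH.a.symm (HH.mul (HH.S.symm (y₁ j)) (HH.a.symm u))))) m := by
  have comul_conj : ∀ {r : ℕ} {z : H} {z₁ z₂ : Fin r → H},
      HH.comul z = ∑ i, z₁ i ⊗ₜ[k] z₂ i →
      HH.comul (C.symm (B (C z))) = ∑ i, C.symm (B (C (z₁ i))) ⊗ₜ[k] C.symm (B (C (z₂ i))) :=
    fun hz => hC.symm.comul_eq_sum (hB.comul_eq_sum (hC.comul_eq_sum hz))
  have coact_act := YN.compat _ x n (fun j => C.symm (B (C (y₁ j))))
    (fun j => C.symm (B (C (y₂ j)))) (comul_conj hy) p (fun j l => C.symm (B (C (y₂₁ j l))))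
    (fun j l => C.symm (B (C (y₂₂ j l)))) (fun j => comul_conj (hy₂ j)) q x₀ x₁ hx
  have S_conj : ∀ z, B.symm (C (HH.S.symm (C.symm (B (C z))))) = C (HH.S.symm z) := fun z => by
    rw [← hC.symm.map_S_symm, ← hB.map_S_symm, ← hC.map_S_symm]
    simp
  rw [braiding_tmul, coact_act]
  simp only [map_sum, map_tmul, LinearEquiv.coe_coe, LinearMap.comp_apply, LinearMap.flip_apply,
    YN.mu_act, YM.mu_symm_act, YM.act_act_mu_symm]
  refine Finset.sum_congr rfl fun j _ => Finset.sum_congr rfl fun l _ =>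
    Finset.sum_congr rfl fun s _ => ?_
  rw [hB.symm.map_mul, S_conj, ← HH.a_symm_mul, HH.a_symm_mul_mul, hC.map_a_symm, hC.map_mul,
    hC.map_a_symm]

theorem sum_braiding_act_tmul_act (hB : IsHomHopfAuto HH B) (hC : IsHomHopfAuto HH C)
    (hD : IsHomHopfAuto HH D) (YM : YDModule HH A B M) (YN : YDModule HH C D N) (m : M)
    {h : H} {x : N} {n q : ℕ} {h₁ h₂ : Fin n → H} {x₀ : Fin q → N} {x₁ : Fin q → H}
    (hh : HH.comul h = ∑ i, h₁ i ⊗ₜ[k] h₂ i) (hx : YN.coact x = ∑ s, x₀ s ⊗ₜ[k] x₁ s) :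
    ∑ i, braiding YM YN (YM.act (C (h₁ i)) m ⊗ₜ[k] YN.act (C.symm (B (C (h₂ i)))) x)
      = ∑ i, ∑ s, YN.act (C.symm (B (C (h₁ i)))) (YN.mu (x₀ s)) ⊗ₜ[k]
          YM.act (HH.mul (HH.a.symm (B.symm (D (C.symm (B (C (h₂ i))))))) (B.symm (x₁ s))) m := by
  obtain ⟨p, h₂₁, h₂₂, hh₂⟩ := exists_fin_sum_tmul_family fun i => HH.comul (h₂ i)
  obtain ⟨w, h₂₂₁, h₂₂₂, hh₂₂⟩ :=
    exists_fin_sum_tmul_family fun ij : Fin n × Fin p => HH.comul (h₂₂ ij.1 ij.2)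
  -- the summands of `braiding_act_tmul_act`, trilinear in `(y₂₁, S⁻¹(y₁) · a⁻¹(u), y₂₂)`
  let summand : H →ₗ[k] H →ₗ[k] H →ₗ[k] N ⊗[k] M := LinearMap.mk₃ (fun u v v' => ∑ s,
      YN.act (HH.a (HH.a (C.symm (B (C u))))) (YN.mu (x₀ s)) ⊗ₜ[k]
        YM.act (HH.mul (B.symm (HH.mul (D (C.symm (B (C v')))) (HH.a.symm (x₁ s))))
          (C (HH.a.symm v))) m)
    (by simp [Finset.sum_add_distrib, add_tmul]) (by simp [Finset.smul_sum, smul_tmul'])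
    (by simp [Finset.sum_add_distrib, tmul_add]) (by simp [Finset.smul_sum, tmul_smul])
    (by simp [Finset.sum_add_distrib, tmul_add]) (by simp [Finset.smul_sum, tmul_smul])
  have contraction :=
    HomHopf.sum_S_symm_mul_a_symm_comul summand hh hh₂ fun i j => hh₂₂ (i, j)
  simp only [summand, LinearMap.mk₃_apply] at contraction
  rw [Finset.sum_congr rfl fun i _ =>
    braiding_act_tmul_act hB hC YM YN (h₁ i) m (hh₂ i) (fun j => hh₂₂ (i, j)) hx, contraction]
  refine Finset.sum_congr rfl fun i _ => Finset.sum_congr rfl fun s _ => ?_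
  simp only [hC.map_a_symm, hB.map_a_symm, hC.symm.map_a_symm, hD.map_a_symm,
    HH.a.apply_symm_apply, HH.a_symm_one, hC.map_one, HH.mul_one', ← HH.a_symm_mul,
    hB.symm.map_a_symm, hB.symm.map_mul]

end YDModule

theorem stmt_11_general {k : Type*} [Field k] {H : Type*} [AddCommGroup H] [Module k H]
    {M : Type*} [AddCommGroup M] [Module k M] {N : Type*} [AddCommGroup N] [Module k N]
    (HH : HomHopf k H) (A B C D : H ≃ₗ[k] H)
    (hB : IsHomHopfAuto HH B)
    (hC : IsHomHopfAuto HH C) (hD : IsHomHopfAuto HH D)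
    (YM : YDModule HH A B M) (YN : YDModule HH C D N)
    (c : (M ⊗[k] N) →ₗ[k] (N ⊗[k] M))
    (hc : ∀ (m : M) (x : N) (q : ℕ) (n0 : Fin q → N) (n1 : Fin q → H),
      YN.coact x = ∑ l, n0 l ⊗ₜ[k] n1 l →
      c (m ⊗ₜ[k] x) = ∑ l, YN.mu (n0 l) ⊗ₜ[k] YM.act (B.symm (n1 l)) (YM.mu.symm m))
    (actMN : H →ₗ[k] (M ⊗[k] N) →ₗ[k] (M ⊗[k] N))
    (hactMN : ∀ (h : H) (m : M) (x : N) (n : ℕ) (h1 h2 : Fin n → H),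
      HH.comul h = ∑ i, h1 i ⊗ₜ[k] h2 i →
      actMN h (m ⊗ₜ[k] x)
        = ∑ i, YM.act (C (h1 i)) m ⊗ₜ[k] YN.act (C.symm (B (C (h2 i)))) x)
    (actNM : H →ₗ[k] (N ⊗[k] M) →ₗ[k] (N ⊗[k] M))
    (hactNM : ∀ (h : H) (x : N) (m : M) (n : ℕ) (h1 h2 : Fin n → H),
      HH.comul h = ∑ i, h1 i ⊗ₜ[k] h2 i →
      actNM h (x ⊗ₜ[k] m)
        = ∑ i, YN.act (C.symm (B (C (h1 i)))) x ⊗ₜ[k]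
            YM.act (B.symm (D (C.symm (B (C (h2 i)))))) m) :
    ∀ (h : H) (z : M ⊗[k] N), c (actMN h z) = actNM h (c z) := by
  have hc_braiding : c = YDModule.braiding YM YN := TensorProduct.ext' fun m x => by
    obtain ⟨q, x₀, x₁, hx⟩ := exists_fin_sum_tmul (YN.coact x)
    rw [hc m x q x₀ x₁ hx, YDModule.braiding_tmul_eq_sum YM YN m hx]
  intro h z
  induction z with
  | zero => simp
  | add z z' hz hz' => simp only [map_add, hz, hz']
  | tmul m x =>
    obtain ⟨n, h₁, h₂, hh⟩ := exists_fin_sum_tmul (HH.comul h)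
    obtain ⟨q, x₀, x₁, hx⟩ := exists_fin_sum_tmul (YN.coact x)
    rw [hactMN h m x n h₁ h₂ hh, map_sum, hc_braiding,
      YDModule.sum_braiding_act_tmul_act hB hC hD YM YN m hh hx,
      YDModule.braiding_tmul_eq_sum YM YN m hx, map_sum, Finset.sum_comm]
    simp only [hactNM h _ _ n h₁ h₂ hh, YM.act_act_mu_symm]

/-- The braiding c_{M,N}(m⊗n) = ν(n₍₀₎) ⊗ B⁻¹(n₍₁₎)·μ⁻¹(m) is H-linear for the
tensor actions h·(m⊗n) = C(h₁)·m ⊗ C⁻¹BC(h₂)·n on M⊗N and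
h·(n⊗m) = C⁻¹BC(h₁)·n ⊗ B⁻¹DC⁻¹BC(h₂)·m on ᴹN⊗M. -/
theorem stmt_11 {k : Type*} [Field k] {H : Type*} [AddCommGroup H] [Module k H]
    {M : Type*} [AddCommGroup M] [Module k M] {N : Type*} [AddCommGroup N] [Module k N]
    (HH : HomHopf k H) (A B C D : H ≃ₗ[k] H)
    (hA : IsHomHopfAuto HH A) (hB : IsHomHopfAuto HH B)
    (hC : IsHomHopfAuto HH C) (hD : IsHomHopfAuto HH D)
    (YM : YDModule HH A B M) (YN : YDModule HH C D N)
    (c : (M ⊗[k] N) →ₗ[k] (N ⊗[k] M))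
    (hc : ∀ (m : M) (x : N) (q : ℕ) (n0 : Fin q → N) (n1 : Fin q → H),
      YN.coact x = ∑ l, n0 l ⊗ₜ[k] n1 l →
      c (m ⊗ₜ[k] x) = ∑ l, YN.mu (n0 l) ⊗ₜ[k] YM.act (B.symm (n1 l)) (YM.mu.symm m))
    (actMN : H →ₗ[k] (M ⊗[k] N) →ₗ[k] (M ⊗[k] N))
    (hactMN : ∀ (h : H) (m : M) (x : N) (n : ℕ) (h1 h2 : Fin n → H),
      HH.comul h = ∑ i, h1 i ⊗ₜ[k] h2 i →
      actMN h (m ⊗ₜ[k] x)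
        = ∑ i, YM.act (C (h1 i)) m ⊗ₜ[k] YN.act (C.symm (B (C (h2 i)))) x)
    (actNM : H →ₗ[k] (N ⊗[k] M) →ₗ[k] (N ⊗[k] M))
    (hactNM : ∀ (h : H) (x : N) (m : M) (n : ℕ) (h1 h2 : Fin n → H),
      HH.comul h = ∑ i, h1 i ⊗ₜ[k] h2 i →
      actNM h (x ⊗ₜ[k] m)
        = ∑ i, YN.act (C.symm (B (C (h1 i)))) x ⊗ₜ[k]
            YM.act (B.symm (D (C.symm (B (C (h2 i)))))) m) :
    ∀ (h : H) (z : M ⊗[k] N), c (actMN h z) = actNM h (c z) :=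
  stmt_11_general HH A B C D hB hC hD YM YN c hc actMN hactMN actNM hactNM
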